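/- Let A, B, C, α, β, γ be real with A > 0 and AC - B² > 0, and let 𝓗 = A D_η² + B(η D_η + D_η η) + C η² + α D_η + β η + γ acting on L²(ℝ). Then 𝓗 = X X⁺ + √(AC-B²) + γ - |z|², where X = A^{1/2} D_η + ((B + i√(AC-B²))/A^{1/2}) η + z, X⁺ = A^{1/2} D_η + ((B - i√(AC-B²))/A^{1/2}) η + conj(z), and z = α/(2A^{1/2}) + i(Aβ - Bα)/(2A^{1/2}√(AC-B²)). -/

import Mathlib

open Real Complex

/-- `𝓗 = A D_η² + B(η D_η + D_η η) + C η² + α D_η + β η + γ` factorizes as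
`𝓗 = X X⁺ + √(AC-B²) + γ - |z|²` on smooth functions, where `D_η = -i d/dη`. -/
theorem H_factorization (A B C α β γ : ℝ) (hA : 0 < A) (hD : 0 < A * C - B ^ 2)
    (z : ℂ)
    (hz : z = ((α / (2 * Real.sqrt A) : ℝ) : ℂ) +
      Complex.I * (((A * β - B * α) / (2 * Real.sqrt A * Real.sqrt (A * C - B ^ 2)) : ℝ) : ℂ))
    (X Xp : (ℝ → ℂ) → (ℝ → ℂ))
    (hX : ∀ (f : ℝ → ℂ) (t : ℝ),
      X f t = (Real.sqrt A : ℂ) * (-Complex.I * deriv f t) +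
        (((B : ℂ) + Complex.I * (Real.sqrt (A * C - B ^ 2) : ℂ)) / (Real.sqrt A : ℂ)) *
          (t : ℂ) * f t + z * f t)
    (hXp : ∀ (f : ℝ → ℂ) (t : ℝ),
      Xp f t = (Real.sqrt A : ℂ) * (-Complex.I * deriv f t) +
        (((B : ℂ) - Complex.I * (Real.sqrt (A * C - B ^ 2) : ℂ)) / (Real.sqrt A : ℂ)) *
          (t : ℂ) * f t + (starRingEnd ℂ) z * f t) :
    ∀ f : ℝ → ℂ, ContDiff ℝ (⊤ : ℕ∞) f → ∀ η : ℝ,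
      (A : ℂ) * (-Complex.I * deriv (fun s : ℝ => -Complex.I * deriv f s) η) +
        (B : ℂ) * ((η : ℂ) * (-Complex.I * deriv f η) +
          (-Complex.I * deriv (fun s : ℝ => (s : ℂ) * f s) η)) +
        (C : ℂ) * (η : ℂ) ^ 2 * f η + (α : ℂ) * (-Complex.I * deriv f η) +
        (β : ℂ) * (η : ℂ) * f η + (γ : ℂ) * f η =
      X (Xp f) η +
        ((Real.sqrt (A * C - B ^ 2) : ℂ) + (γ : ℂ) - (Complex.normSq z : ℂ)) * f η := by
  intro f hf η
  have hf1 : Differentiable ℝ f := hf.differentiable (by simp)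
  have hf2 : Differentiable ℝ (deriv f) :=
    ((contDiff_infty_iff_deriv.mp (hf.of_le (by simp))).2).differentiable (by simp)
  have h1 : HasDerivAt f (deriv f η) η := (hf1 η).hasDerivAt
  have h2 : HasDerivAt (deriv f) (deriv (deriv f) η) η := (hf2 η).hasDerivAt
  have hof : HasDerivAt (fun t : ℝ => (t : ℂ)) 1 η := by
    simpa using (hasDerivAt_id η).ofReal_comp
  set a : ℂ := (Real.sqrt A : ℂ) with ha
  set d : ℂ := (Real.sqrt (A * C - B ^ 2) : ℂ) with hdd
  have ha2 : a ^ 2 = (A : ℂ) := by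
    rw [ha]; norm_cast; exact Real.sq_sqrt hA.le
  have hd2 : d ^ 2 = (A : ℂ) * C - (B : ℂ) ^ 2 := by
    rw [hdd]; norm_cast; exact Real.sq_sqrt hD.le
  have ha0 : a ≠ 0 := by
    simp [ha, Complex.ofReal_ne_zero, Real.sqrt_ne_zero'.mpr hA]
  have hd0 : d ≠ 0 := by
    simp [hdd, Complex.ofReal_ne_zero, Real.sqrt_ne_zero'.mpr hD]
  set c : ℂ := ((B : ℂ) - Complex.I * d) / a with hc
  set w : ℂ := (starRingEnd ℂ) z with hw
  have hXpf : Xp f = fun t : ℝ => a * (-Complex.I * deriv f t) + c * (t : ℂ) * f t + w * f t :=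
    funext (hXp f)
  have hdXp : HasDerivAt (Xp f)
      (a * (-Complex.I * deriv (deriv f) η) + (c * 1 * f η + c * (η : ℂ) * deriv f η)
        + w * deriv f η) η := by
    rw [hXpf]
    exact (((h2.const_mul (-Complex.I)).const_mul a).add
      ((hof.const_mul c).mul h1)).add (h1.const_mul w)
  have e1 : deriv (fun s : ℝ => -Complex.I * deriv f s) η = -Complex.I * deriv (deriv f) η :=
    (h2.const_mul (-Complex.I)).deriv
  have e2 : deriv (fun s : ℝ => (s : ℂ) * f s) η = 1 * f η + (η : ℂ) * deriv f η :=
    (hof.mul h1).deriv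
  rw [hX (Xp f) η, hdXp.deriv, hXp f η, e1, e2]
  have hnz : (Complex.normSq z : ℂ) = z * w := by
    rw [hw, Complex.mul_conj]
  rw [hnz]
  have hwz : w = ((α / (2 * Real.sqrt A) : ℝ) : ℂ) -
      Complex.I * (((A * β - B * α) / (2 * Real.sqrt A * Real.sqrt (A * C - B ^ 2)) : ℝ) : ℂ) := by
    rw [hw, hz]
    simp only [map_add, map_mul, Complex.conj_ofReal, Complex.conj_I]
    ring
  have hzw : z + w = (α : ℂ) / a := by
    rw [hz, hwz, ha]; push_cast; field_simp; ring
  have hzw2 : w - z = -Complex.I * (((A : ℂ) * β - B * α) / (a * d)) := by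
    rw [hz, hwz, ha, hdd]; push_cast; field_simp; ring
  have hA' : (A : ℂ) = a ^ 2 := ha2.symm
  have hC' : (C : ℂ) = (d ^ 2 + (B : ℂ) ^ 2) / a ^ 2 := by
    rw [hd2, hA']; field_simp; ring
  have hα : (α : ℂ) = a * (z + w) := by rw [hzw]; field_simp
  have h3 : (A : ℂ) * β - B * α = Complex.I * a * d * (w - z) := by
    rw [hzw2]; field_simp
    linear_combination ((A : ℂ) * β - B * α) * Complex.I_sq
  have hβ : (β : ℂ) = (Complex.I * d * (w - z) + B * (z + w)) / a := by
    rw [eq_div_iff ha0]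
    refine mul_left_cancel₀ ha0 ?_
    linear_combination h3 + (B : ℂ) * hα - (β : ℂ) * hA'
  rw [hC', hα, hβ, hA', hc]
  field_simp
  ring_nf
  simp only [Complex.I_sq, pow_succ, pow_zero, one_mul, Complex.I_mul_I]
  ring
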